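/- The coordinate change ξ₁(y)=-e^{-y₁}, ξ₂(y)=(v/q)(y₁+e^{-y₁})+e^{-y₁}y₂, ξ₃(y)=(v/q)(y₁-sinh y₁)+(q/(2v))e^{-y₁}y₂²+(e^{-y₁}+y₁-1)y₂+y₃ transforms the metric G₁₂=v e^{-y₁}y₁, G₁₃=v e^{-y₁}, G₂₂=q e^{-2y₁} (symmetric, other entries zero) into the constant metric G'₁₃=G'₃₁=v, G'₂₂=q (other entries zero), i.e., (Dξ(y))ᵗ G' Dξ(y) = G(y) for all y. -/

import Mathlib

open Real Matrix

noncomputable section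

/-- Partial derivative of a scalar function on ℝ³ in the i-th coordinate direction. -/
def pd (i : Fin 3) (f : (Fin 3 → ℝ) → ℝ) (y : Fin 3 → ℝ) : ℝ :=
  fderiv ℝ f y (Pi.single i 1)

/-- Christoffel symbols Γ^k_{ij} of the Levi-Civita connection of the metric g. -/
def christoffel (g : (Fin 3 → ℝ) → Matrix (Fin 3) (Fin 3) ℝ) (k i j : Fin 3)
    (y : Fin 3 → ℝ) : ℝ :=
  (1/2) * ∑ l, (g y)⁻¹ k l *
    (pd i (fun z => g z l j) y + pd j (fun z => g z l i) y - pd l (fun z => g z i j) y)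

/-- Riemann curvature tensor R^l_{kij}. -/
def riemann (g : (Fin 3 → ℝ) → Matrix (Fin 3) (Fin 3) ℝ) (l k i j : Fin 3)
    (y : Fin 3 → ℝ) : ℝ :=
  pd i (christoffel g l j k) y - pd j (christoffel g l i k) y
  + ∑ m, (christoffel g l i m y * christoffel g m j k y
        - christoffel g l j m y * christoffel g m i k y)

/-- Ricci tensor R_{ij} = R^k_{ikj}. -/
def ricci (g : (Fin 3 → ℝ) → Matrix (Fin 3) (Fin 3) ℝ) (i j : Fin 3)
    (y : Fin 3 → ℝ) : ℝ :=
  ∑ k, riemann g k i k j y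

/-- Scalar (Gauss) curvature R = g^{ij} R_{ij}. -/
def scalarCurv (g : (Fin 3 → ℝ) → Matrix (Fin 3) (Fin 3) ℝ) (y : Fin 3 → ℝ) : ℝ :=
  ∑ i, ∑ j, (g y)⁻¹ i j * ricci g i j y

/-- Covariant Hessian ∇ᵢ∇ⱼΦ = ∂ᵢ∂ⱼΦ - Γ^k_{ij} ∂ₖΦ. -/
def covHess (g : (Fin 3 → ℝ) → Matrix (Fin 3) (Fin 3) ℝ) (Φ : (Fin 3 → ℝ) → ℝ)
    (i j : Fin 3) (y : Fin 3 → ℝ) : ℝ :=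
  pd i (pd j Φ) y - ∑ k, christoffel g k i j y * pd k Φ y

/-- The (4|1) flat metric. -/
def G41 (q v : ℝ) (y : Fin 3 → ℝ) : Matrix (Fin 3) (Fin 3) ℝ :=
  !![0, v * exp (-(y 0)) * y 0, v * exp (-(y 0));
     v * exp (-(y 0)) * y 0, q * exp (-2 * y 0), 0;
     v * exp (-(y 0)), 0, 0]


/-- Flat coordinates for the (4|1) metric. -/
def xi41 (q v : ℝ) (y : Fin 3 → ℝ) : Fin 3 → ℝ :=
  ![-exp (-(y 0)),
    v / q * (y 0 + exp (-(y 0))) + exp (-(y 0)) * y 1,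
    v / q * (y 0 - Real.sinh (y 0)) + q / (2 * v) * exp (-(y 0)) * (y 1) ^ 2
      + (exp (-(y 0)) + y 0 - 1) * y 1 + y 2]


/-- Jacobian matrix of a map ℝ³ → ℝ³. -/
def jacobian (ξ : (Fin 3 → ℝ) → Fin 3 → ℝ) (y : Fin 3 → ℝ) : Matrix (Fin 3) (Fin 3) ℝ :=
  Matrix.of fun i j => pd j (fun z => ξ z i) y


/-- The constant metric G′. -/
def Gconst (q v : ℝ) : Matrix (Fin 3) (Fin 3) ℝ :=
  !![0, 0, v; 0, q, 0; v, 0, 0]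

noncomputable def PR (i : Fin 3) : (Fin 3 → ℝ) →L[ℝ] ℝ :=
  ContinuousLinearMap.proj i

lemma hPR (i : Fin 3) (y : Fin 3 → ℝ) : HasFDerivAt (fun z : Fin 3 → ℝ => z i) (PR i) y :=
  (PR i).hasFDerivAt

lemma pd0 (q v : ℝ) (y : Fin 3 → ℝ) (j : Fin 3) :
    pd j (fun z => xi41 q v z 0) y = ![exp (-(y 0)), 0, 0] j := by
  have hf : (fun z : Fin 3 → ℝ => xi41 q v z 0) = fun z : Fin 3 → ℝ => -exp (-(z 0)) := by
    funext z; simp [xi41]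
  have h := ((hPR 0 y).neg.exp).neg
  erw [pd, hf, h.fderiv]
  fin_cases j <;> simp [PR, Pi.single_apply]

lemma pd1 (q v : ℝ) (y : Fin 3 → ℝ) (j : Fin 3) :
    pd j (fun z => xi41 q v z 1) y =
      ![v / q * (1 - exp (-(y 0))) - exp (-(y 0)) * y 1, exp (-(y 0)), 0] j := by
  have hf : (fun z : Fin 3 → ℝ => xi41 q v z 1) =
      fun z : Fin 3 → ℝ => v / q * (z 0 + exp (-(z 0))) + exp (-(z 0)) * z 1 := by
    funext z; simp [xi41]
  have h := (((hPR 0 y).add ((hPR 0 y).neg.exp)).const_mul (v / q)).add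
    (((hPR 0 y).neg.exp).mul (hPR 1 y))
  erw [pd, hf, h.fderiv]
  fin_cases j <;> (simp [PR, Pi.single_apply]; try ring)

lemma pd2 (q v : ℝ) (y : Fin 3 → ℝ) (j : Fin 3) :
    pd j (fun z => xi41 q v z 2) y =
      ![v / q * (1 - Real.cosh (y 0)) - q / (2 * v) * exp (-(y 0)) * (y 1) ^ 2
          + (1 - exp (-(y 0))) * y 1,
        q / (2 * v) * exp (-(y 0)) * (2 * y 1) + (exp (-(y 0)) + y 0 - 1), 1] j := by
  have hf : (fun z : Fin 3 → ℝ => xi41 q v z 2) =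
      fun z : Fin 3 → ℝ => v / q * (z 0 - Real.sinh (z 0))
        + q / (2 * v) * exp (-(z 0)) * (z 1 * z 1)
        + (exp (-(z 0)) + z 0 - 1) * z 1 + z 2 := by
    funext z
    simp only [xi41, Matrix.cons_val_two, Matrix.tail_cons, Matrix.head_cons]
    ring
  have hA := ((hPR 0 y).sub ((hPR 0 y).sinh)).const_mul (v / q)
  have hB := (((hPR 0 y).neg.exp).const_mul (q / (2 * v))).mul ((hPR 1 y).mul (hPR 1 y))
  have hC := ((((hPR 0 y).neg.exp).add (hPR 0 y)).sub (hasFDerivAt_const (1:ℝ) y)).mul (hPR 1 y)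
  have h := ((hA.add hB).add hC).add (hPR 2 y)
  erw [pd, hf, h.fderiv]
  fin_cases j <;> (simp [PR, Pi.single_apply]; try ring)

lemma hJ (q v : ℝ) (y : Fin 3 → ℝ) : jacobian (xi41 q v) y =
    !![exp (-(y 0)), 0, 0;
       v / q * (1 - exp (-(y 0))) - exp (-(y 0)) * y 1, exp (-(y 0)), 0;
       v / q * (1 - Real.cosh (y 0)) - q / (2 * v) * exp (-(y 0)) * (y 1) ^ 2
          + (1 - exp (-(y 0))) * y 1,
        q / (2 * v) * exp (-(y 0)) * (2 * y 1) + (exp (-(y 0)) + y 0 - 1), 1] := by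
  ext i j
  fin_cases i <;> simp [jacobian, pd0, pd1, pd2]

set_option maxHeartbeats 1000000 in
theorem stmt_11 (q v : ℝ) (hq : q ≠ 0) (hv : v ≠ 0) (y : Fin 3 → ℝ) :
    (jacobian (xi41 q v) y)ᵀ * Gconst q v * jacobian (xi41 q v) y = G41 q v y := by
  rw [hJ]
  have hexp : exp (-2 * y 0) = (exp (y 0))⁻¹ * (exp (y 0))⁻¹ := by
    rw [show (-2 * y 0) = -(y 0) + -(y 0) by ring, Real.exp_add, Real.exp_neg]
  have hne := Real.exp_ne_zero (y 0)
  ext i j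
  fin_cases i <;> fin_cases j <;>
    (simp [Matrix.mul_apply, Fin.sum_univ_three, Gconst, G41, Matrix.vecHead, Matrix.vecTail]
     try (simp only [Real.cosh_eq, hexp, Real.exp_neg]; field_simp; try ring)
     try exact Or.inl (by rw [show y 0 * 2 = y 0 + y 0 by ring, Real.exp_add, sq])
     try rw [show y 0 * 2 = y 0 + y 0 by ring, Real.exp_add, sq])
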